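/- arXiv:2501.09312 — 3 statements merged into one kernel-verified Lean document; each statement's English description precedes it below -/
import Mathlib

section
/- (Theorem 2, simulation of a covariant GPOVM by a parallel strategy) For all ĝ g' : G, ‖⟪X, (((f ĝ) ⊗ₖ (1 : Matrix ι ι ℂ))ᴴ).mulVec (vec (f g'))⟫‖ ^ 2 = ‖⟪F, ((f' ĝ)ᴴ * (f' g')).mulVec ψ⟫‖ ^ 2, where ⟪·,·⟫ denotes the inner product of the corresponding EuclideanSpace (conjugate-linear in the first argument). That is, the outcome probability density at estimate ĝ of the covariant GPOVM with seed T = |X⟩⟨X| when the unknown action is g' coincides with that of the parallel covariant measurement with seed |F⟩⟨F| applied to the input state ψ evolved by f' g'. -/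
open MeasureTheory
open scoped Kronecker Matrix ComplexOrder

noncomputable section

namespace GroupEstimation

variable {G : Type} [Group G] [TopologicalSpace G] [IsTopologicalGroup G]
  [CompactSpace G] [T2Space G] [MeasurableSpace G] [BorelSpace G]
variable {Λ : Type} [Fintype Λ] [Nonempty Λ] [DecidableEq Λ]

/-- Vectorization of a square matrix. -/
def vecSq {ι : Type} (A : Matrix ι ι ℂ) : EuclideanSpace ℂ (ι × ι) :=
  WithLp.toLp 2 (fun p => A p.1 p.2)

/-- The block-diagonal representation `f` on `⊕_λ U_λ ⊗ ℂ^{n_λ}`. -/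
def bigF (d n : Λ → ℕ) (f_ : ∀ l : Λ, G → Matrix (Fin (d l)) (Fin (d l)) ℂ) (g : G) :
    Matrix (Σ l : Λ, Fin (d l) × Fin (n l)) (Σ l : Λ, Fin (d l) × Fin (n l)) ℂ :=
  Matrix.blockDiagonal' fun l => f_ l g ⊗ₖ (1 : Matrix (Fin (n l)) (Fin (n l)) ℂ)

/-- The block-diagonal representation `f'` on `⊕_λ U_λ ⊗ ℂ^{d_λ}`. -/
def bigF' (d : Λ → ℕ) (f_ : ∀ l : Λ, G → Matrix (Fin (d l)) (Fin (d l)) ℂ) (g : G) :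
    Matrix (Σ l : Λ, Fin (d l) × Fin (d l)) (Σ l : Λ, Fin (d l) × Fin (d l)) ℂ :=
  Matrix.blockDiagonal' fun l => f_ l g ⊗ₖ (1 : Matrix (Fin (d l)) (Fin (d l)) ℂ)

/-- The vector `F = ⊕_λ √(d λ) |I_λ⟩⟩`. -/
def Fvec (d : Λ → ℕ) : EuclideanSpace ℂ (Σ l : Λ, Fin (d l) × Fin (d l)) :=
  WithLp.toLp 2 (fun p => if p.2.1 = p.2.2 then (Real.sqrt (d p.1) : ℂ) else 0)

/-- The seed vector `X = ⊕_{λ,λ'} |X_{λ,λ'}⟩⟩ ⊗ |Y_{λ,λ'}⟩`. -/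
def Xvec (d n : Λ → ℕ)
    (Xm : ∀ l l' : Λ, Matrix (Fin (d l)) (Fin (d l')) ℂ)
    (Y : ∀ l l' : Λ, Fin (n l) × Fin (n l') → ℂ) :
    EuclideanSpace ℂ ((Σ l : Λ, Fin (d l) × Fin (n l)) × (Σ l : Λ, Fin (d l) × Fin (n l))) :=
  WithLp.toLp 2 (fun pq => Xm pq.1.1 pq.2.1 pq.1.2.1 pq.2.2.1 * Y pq.1.1 pq.2.1 (pq.1.2.2, pq.2.2.2))

/-- The input state `ψ[T]` of the simulating parallel strategy. -/
def psiVec (d n : Λ → ℕ)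
    (Xm : ∀ l l' : Λ, Matrix (Fin (d l)) (Fin (d l')) ℂ)
    (Y : ∀ l l' : Λ, Fin (n l) × Fin (n l') → ℂ) :
    EuclideanSpace ℂ (Σ l : Λ, Fin (d l) × Fin (d l)) :=
  WithLp.toLp 2 (fun p => ((((d p.1 : ℝ)) ^ (-(1:ℝ)/2) : ℝ) : ℂ) *
    (∑ a, star (Y p.1 p.1 (a, a))) * star (Xm p.1 p.1 p.2.2 p.2.1))

/-- The average state on the doubled system (entrywise Bochner integral). -/
def rhoMuB (μ : Measure G) (d n : Λ → ℕ)
    (f_ : ∀ l : Λ, G → Matrix (Fin (d l)) (Fin (d l)) ℂ) :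
    Matrix ((Σ l : Λ, Fin (d l) × Fin (n l)) × (Σ l : Λ, Fin (d l) × Fin (n l)))
      ((Σ l : Λ, Fin (d l) × Fin (n l)) × (Σ l : Λ, Fin (d l) × Fin (n l))) ℂ :=
  fun p q => ∫ g, bigF d n f_ g p.1 p.2 * star (bigF d n f_ g q.1 q.2) ∂μ

end GroupEstimation

/-!
Both amplitudes equal `∑ λ, tr (X_λλᴴ A_λ) * conj (tr Y_λλ)` with `A_λ = f_λ(ĝ)ᴴ f_λ(g')`.
On the left, `(f ĝ ⊗ 1)ᴴ vec (f g') = vec (f(ĝ)ᴴ f(g'))`, so the amplitude is the Hilbert–Schmidt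
pairing of the seed matrix with the block-diagonal matrix `⊕ A_λ ⊗ 1`; it only sees the diagonal
blocks `X_λλ ⊗ Y_λλ` of the seed, and there the trace factorises over the tensor product.
On the right, the `λ`-blocks of `F` and `ψ` are `√d_λ vec 1` and `d_λ^(-1/2) conj (tr Y_λλ) vec X_λλᴴ`
(up to transposition), so the factors `√d_λ` and `d_λ^(-1/2)` cancel.
-/

theorem Real.sqrt_mul_rpow_neg_half {x : ℝ} (hx : 0 < x) : √x * x ^ (-(1:ℝ)/2) = 1 := by
  rw [Real.sqrt_eq_rpow, ← Real.rpow_add hx]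
  norm_num

namespace Matrix

variable {R : Type*} {o : Type*} [Fintype o] [DecidableEq o] {m' n' : o → Type*}
  [∀ k, Fintype (m' k)] [∀ k, Fintype (n' k)]

theorem trace_mul_blockDiagonal' [NonUnitalNonAssocSemiring R]
    (M : Matrix (Σ k, m' k) (Σ k, n' k) R) (N : ∀ k, Matrix (n' k) (m' k) R) :
    (M * blockDiagonal' N).trace = ∑ k, (blockDiag' M k * N k).trace := by
  simp only [trace, diag, mul_apply, Fintype.sum_sigma]
  refine Fintype.sum_congr _ _ fun k => Fintype.sum_congr _ _ fun i => ?_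
  rw [Fintype.sum_eq_single k fun k' hk' => Fintype.sum_eq_zero _ fun j => by
    rw [blockDiagonal'_apply_ne N j i hk', mul_zero]]
  simp only [blockDiagonal'_apply_eq, blockDiag'_apply]

theorem dotProduct_blockDiagonal'_mulVec [NonUnitalNonAssocSemiring R]
    (u : (Σ k, m' k) → R) (M : ∀ k, Matrix (m' k) (n' k) R) (v : (Σ k, n' k) → R) :
    u ⬝ᵥ (blockDiagonal' M *ᵥ v) = ∑ k, (fun i => u ⟨k, i⟩) ⬝ᵥ (M k *ᵥ fun j => v ⟨k, j⟩) := by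
  simp only [dotProduct, mulVec, Fintype.sum_sigma]
  refine Fintype.sum_congr _ _ fun k => Fintype.sum_congr _ _ fun i => ?_
  rw [Fintype.sum_eq_single k fun k' hk' => Fintype.sum_eq_zero _ fun j => by
    rw [blockDiagonal'_apply_ne M i j hk'.symm, zero_mul]]
  simp only [blockDiagonal'_apply_eq]

end Matrix

namespace GroupEstimation

open Matrix

section

theorem ofLp_vecSq {ι : Type} (A : Matrix ι ι ℂ) : WithLp.ofLp (vecSq A) = vec Aᵀ := rfl

theorem inner_vecSq_vecSq {ι : Type} [Fintype ι] (A B : Matrix ι ι ℂ) :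
    inner ℂ (vecSq A) (vecSq B) = (Aᴴ * B).trace := by
  rw [EuclideanSpace.inner_eq_star_dotProduct, ofLp_vecSq, ofLp_vecSq, dotProduct_comm,
    star_vec_dotProduct_vec, conjTranspose_transpose_eq_transpose_conjTranspose, ← transpose_mul,
    trace_transpose, trace_mul_comm]

theorem kronecker_one_mulVec_vecSq {ι : Type} [Fintype ι] [DecidableEq ι] (A B : Matrix ι ι ℂ) :
    (A ⊗ₖ (1 : Matrix ι ι ℂ)) *ᵥ WithLp.ofLp (vecSq B) = WithLp.ofLp (vecSq (A * B)) := by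
  rw [ofLp_vecSq, ofLp_vecSq, kronecker_mulVec_vec, Matrix.one_mul, transpose_mul]

variable {Λ : Type}

def seedMatrix (d n : Λ → ℕ) (Xm : ∀ l l' : Λ, Matrix (Fin (d l)) (Fin (d l')) ℂ)
    (Y : ∀ l l' : Λ, Fin (n l) × Fin (n l') → ℂ) :
    Matrix (Σ l : Λ, Fin (d l) × Fin (n l)) (Σ l : Λ, Fin (d l) × Fin (n l)) ℂ :=
  of fun p q => Xm p.1 q.1 p.2.1 q.2.1 * Y p.1 q.1 (p.2.2, q.2.2)

theorem Xvec_eq_vecSq_seedMatrix (d n : Λ → ℕ) (Xm : ∀ l l' : Λ, Matrix (Fin (d l)) (Fin (d l')) ℂ)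
    (Y : ∀ l l' : Λ, Fin (n l) × Fin (n l') → ℂ) : Xvec d n Xm Y = vecSq (seedMatrix d n Xm Y) :=
  rfl

theorem blockDiag'_seedMatrix (d n : Λ → ℕ) (Xm : ∀ l l' : Λ, Matrix (Fin (d l)) (Fin (d l')) ℂ)
    (Y : ∀ l l' : Λ, Fin (n l) × Fin (n l') → ℂ) (l : Λ) :
    blockDiag' (seedMatrix d n Xm Y) l = Xm l l ⊗ₖ of (Function.curry (Y l l)) :=
  rfl

variable {G : Type} [DecidableEq Λ]

theorem bigF'_eq_bigF (d : Λ → ℕ) (f_ : ∀ l : Λ, G → Matrix (Fin (d l)) (Fin (d l)) ℂ) :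
    bigF' d f_ = bigF d d f_ :=
  rfl

variable [Fintype Λ]

theorem bigF_conjTranspose_mul (d n : Λ → ℕ) (f_ : ∀ l : Λ, G → Matrix (Fin (d l)) (Fin (d l)) ℂ)
    (g h : G) : (bigF d n f_ g)ᴴ * bigF d n f_ h =
      blockDiagonal' fun l => ((f_ l g)ᴴ * f_ l h) ⊗ₖ (1 : Matrix (Fin (n l)) (Fin (n l)) ℂ) := by
  simp only [bigF, blockDiagonal'_conjTranspose, conjTranspose_kronecker, conjTranspose_one,
    ← blockDiagonal'_mul, ← mul_kronecker_mul, Matrix.one_mul]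

theorem inner_Xvec_vecSq_blockDiagonal' (d n : Λ → ℕ)
    (Xm : ∀ l l' : Λ, Matrix (Fin (d l)) (Fin (d l')) ℂ)
    (Y : ∀ l l' : Λ, Fin (n l) × Fin (n l') → ℂ) (A : ∀ l, Matrix (Fin (d l)) (Fin (d l)) ℂ) :
    inner ℂ (Xvec d n Xm Y)
        (vecSq (blockDiagonal' fun l => A l ⊗ₖ (1 : Matrix (Fin (n l)) (Fin (n l)) ℂ))) =
      ∑ l, ((Xm l l)ᴴ * A l).trace * star (of (Function.curry (Y l l))).trace := by
  rw [Xvec_eq_vecSq_seedMatrix, inner_vecSq_vecSq, trace_mul_blockDiagonal']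
  refine Fintype.sum_congr _ _ fun l => ?_
  rw [blockDiag'_conjTranspose, blockDiag'_seedMatrix, conjTranspose_kronecker, ← mul_kronecker_mul,
    Matrix.mul_one, trace_kronecker, trace_conjTranspose]

theorem inner_Fvec_blockDiagonal'_mulVec_psiVec (d n : Λ → ℕ) (hd : ∀ l, 0 < d l)
    (Xm : ∀ l l' : Λ, Matrix (Fin (d l)) (Fin (d l')) ℂ)
    (Y : ∀ l l' : Λ, Fin (n l) × Fin (n l') → ℂ) (A : ∀ l, Matrix (Fin (d l)) (Fin (d l)) ℂ) :
    inner ℂ (Fvec d) (WithLp.toLp 2 ((blockDiagonal' fun l =>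
        A l ⊗ₖ (1 : Matrix (Fin (d l)) (Fin (d l)) ℂ)) *ᵥ WithLp.ofLp (psiVec d n Xm Y)) :
          EuclideanSpace ℂ (Σ l : Λ, Fin (d l) × Fin (d l))) =
      ∑ l, ((Xm l l)ᴴ * A l).trace * star (of (Function.curry (Y l l))).trace := by
  rw [EuclideanSpace.inner_eq_star_dotProduct, dotProduct_comm, WithLp.ofLp_toLp,
    dotProduct_blockDiagonal'_mulVec]
  refine Fintype.sum_congr _ _ fun l => ?_
  have hF : (fun i => star (WithLp.ofLp (Fvec d)) ⟨l, i⟩) =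
      star ((Real.sqrt (d l) : ℂ) • vec (1 : Matrix (Fin (d l)) (Fin (d l)) ℂ)) := by
    ext ⟨k, k'⟩
    rcases eq_or_ne k k' with rfl | hkk'
    · simp [Fvec]
    · simp [Fvec, hkk', hkk'.symm]
  have hψ : (fun i => WithLp.ofLp (psiVec d n Xm Y) ⟨l, i⟩) =
      ((((d l : ℝ) ^ (-(1:ℝ)/2) : ℝ) : ℂ) * star (of (Function.curry (Y l l))).trace) •
        vec (Xm l l)ᴴᵀ := by
    ext ⟨k, k'⟩
    simp [psiVec, trace]
  have hc : star (Real.sqrt (d l) : ℂ) * (((d l : ℝ) ^ (-(1:ℝ)/2) : ℝ) : ℂ) = 1 := by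
    rw [Complex.star_def, Complex.conj_ofReal, ← Complex.ofReal_mul,
      Real.sqrt_mul_rpow_neg_half (Nat.cast_pos.mpr (hd l)), Complex.ofReal_one]
  rw [hF, hψ, star_smul, mulVec_smul, kronecker_mulVec_vec, smul_dotProduct, dotProduct_smul,
    star_vec_dotProduct_vec, conjTranspose_one, Matrix.one_mul, Matrix.one_mul, ← transpose_mul,
    trace_transpose, trace_mul_comm, smul_eq_mul, smul_eq_mul]
  linear_combination (((Xm l l)ᴴ * A l).trace * star (of (Function.curry (Y l l))).trace) * hc

end

theorem covariant_GPOVM_simulated_by_parallel_general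
    {G : Type}
    {Λ : Type} [Fintype Λ] [DecidableEq Λ]
    (d n : Λ → ℕ) (hd : ∀ l, 0 < d l)
    (f_ : ∀ l : Λ, G → Matrix (Fin (d l)) (Fin (d l)) ℂ)
    (Xm : ∀ l l' : Λ, Matrix (Fin (d l)) (Fin (d l')) ℂ)
    (Y : ∀ l l' : Λ, Fin (n l) × Fin (n l') → ℂ)
    (gh g' : G) :
    ‖(inner ℂ (Xvec d n Xm Y)
        ((WithLp.toLp 2 (((bigF d n f_ gh ⊗ₖ
              (1 : Matrix (Σ l : Λ, Fin (d l) × Fin (n l))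
                (Σ l : Λ, Fin (d l) × Fin (n l)) ℂ))ᴴ).mulVec
            (WithLp.ofLp (vecSq (bigF d n f_ g')))) :
          EuclideanSpace ℂ ((Σ l : Λ, Fin (d l) × Fin (n l)) ×
            (Σ l : Λ, Fin (d l) × Fin (n l))))) : ℂ)‖ ^ 2 =
      ‖(inner ℂ (Fvec d)
          ((WithLp.toLp 2 (((bigF' d f_ gh)ᴴ * bigF' d f_ g').mulVec (WithLp.ofLp (psiVec d n Xm Y))) :
            EuclideanSpace ℂ (Σ l : Λ, Fin (d l) × Fin (d l)))) : ℂ)‖ ^ 2 := by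
  rw [conjTranspose_kronecker, conjTranspose_one, kronecker_one_mulVec_vecSq, WithLp.toLp_ofLp,
    bigF_conjTranspose_mul, inner_Xvec_vecSq_blockDiagonal', bigF'_eq_bigF,
    bigF_conjTranspose_mul, inner_Fvec_blockDiagonal'_mulVec_psiVec d n hd]

/-- Theorem 2: the outcome probability density of the covariant GPOVM with seed
`T = |X⟩⟨X|` coincides with that of the standard covariant parallel measurement
applied to the input state `ψ[T]`. -/
theorem covariant_GPOVM_simulated_by_parallel
    {G : Type} [Group G] [TopologicalSpace G] [IsTopologicalGroup G]
    [CompactSpace G] [T2Space G] [MeasurableSpace G] [BorelSpace G]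
    (μ : Measure G) [μ.IsHaarMeasure] [IsProbabilityMeasure μ]
    {Λ : Type} [Fintype Λ] [Nonempty Λ] [DecidableEq Λ]
    (d n : Λ → ℕ) (hd : ∀ l, 0 < d l) (hn : ∀ l, 0 < n l)
    (f_ : ∀ l : Λ, G → Matrix (Fin (d l)) (Fin (d l)) ℂ)
    (hf_cont : ∀ l, Continuous (f_ l))
    (hf_mul : ∀ (l : Λ) (g h : G), f_ l (g * h) = f_ l g * f_ l h)
    (hf_one : ∀ l, f_ l 1 = 1)
    (hf_unit : ∀ (l : Λ) (g : G), f_ l g ∈ Matrix.unitaryGroup (Fin (d l)) ℂ)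
    (hirr : ∀ (l : Λ) (p : Submodule ℂ (Fin (d l) → ℂ)),
      (∀ g : G, ∀ x ∈ p, (f_ l g).mulVec x ∈ p) → p = ⊥ ∨ p = ⊤)
    (hdis : ∀ l l' : Λ, l ≠ l' → ¬ ∃ S : Matrix (Fin (d l')) (Fin (d l)) ℂ,
      Function.Bijective S.mulVec ∧ ∀ g : G, S * f_ l g = f_ l' g * S)
    (Xm : ∀ l l' : Λ, Matrix (Fin (d l)) (Fin (d l')) ℂ)
    (Y : ∀ l l' : Λ, Fin (n l) × Fin (n l') → ℂ)
    (gh g' : G) :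
    ‖(inner ℂ (Xvec d n Xm Y)
        ((WithLp.toLp 2 (((bigF d n f_ gh ⊗ₖ
              (1 : Matrix (Σ l : Λ, Fin (d l) × Fin (n l))
                (Σ l : Λ, Fin (d l) × Fin (n l)) ℂ))ᴴ).mulVec
            (WithLp.ofLp (vecSq (bigF d n f_ g')))) :
          EuclideanSpace ℂ ((Σ l : Λ, Fin (d l) × Fin (n l)) ×
            (Σ l : Λ, Fin (d l) × Fin (n l))))) : ℂ)‖ ^ 2 =
      ‖(inner ℂ (Fvec d)
          ((WithLp.toLp 2 (((bigF' d f_ gh)ᴴ * bigF' d f_ g').mulVec (WithLp.ofLp (psiVec d n Xm Y))) :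
            EuclideanSpace ℂ (Σ l : Λ, Fin (d l) × Fin (d l)))) : ℂ)‖ ^ 2 :=
  covariant_GPOVM_simulated_by_parallel_general d n hd f_ Xm Y gh g'

end GroupEstimation
end
end

section
/- For every positive semidefinite matrix T indexed by Fin d × Fin d, the map M_T satisfies: M_T ∅ = 0; M_T B is positive semidefinite for every Borel set B; M_T (⋃ j, B j) = ∑' j, M_T (B j) for every countable pairwise disjoint family of Borel sets; M_T (g • B) = (A g) * (M_T B) * (A g)ᴴ for every g : G and Borel set B; and ((M_T Set.univ) * ρμ).trace = (T * ρμ).trace. In particular, M_T is a covariant GPOVM if and only if (T * ρμ).trace = 1. -/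
open MeasureTheory
open scoped Kronecker Matrix ComplexOrder

noncomputable section

namespace GroupEstimation

variable {G : Type} [Group G] [TopologicalSpace G] [IsTopologicalGroup G]
  [CompactSpace G] [T2Space G] [MeasurableSpace G] [BorelSpace G]

/-- Vectorization of a square matrix. -/
def vec {d : ℕ} (A : Matrix (Fin d) (Fin d) ℂ) : EuclideanSpace ℂ (Fin d × Fin d) :=
  WithLp.toLp 2 (fun p => A p.1 p.2)

/-- The rank-one state `|f(g)⟩⟩⟨⟨f(g)|`. -/
def rho {d : ℕ} (f : G → Matrix (Fin d) (Fin d) ℂ) (g : G) :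
    Matrix (Fin d × Fin d) (Fin d × Fin d) ℂ :=
  fun p q => f g p.1 p.2 * star (f g q.1 q.2)

/-- `A g = f g ⊗ₖ 1`. -/
def Amat {d : ℕ} (f : G → Matrix (Fin d) (Fin d) ℂ) (g : G) :
    Matrix (Fin d × Fin d) (Fin d × Fin d) ℂ :=
  f g ⊗ₖ (1 : Matrix (Fin d) (Fin d) ℂ)

/-- The average state `ρμ` (entrywise Bochner integral). -/
def rhoMu (μ : Measure G) {d : ℕ} (f : G → Matrix (Fin d) (Fin d) ℂ) :
    Matrix (Fin d × Fin d) (Fin d × Fin d) ℂ :=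
  fun p q => ∫ g, rho f g p q ∂μ

/-- positivity, vanishing at ∅ and countable additivity (the "measure part" of a GPOVM). -/
def IsPreGPOVM {d : ℕ} (M : Set G → Matrix (Fin d × Fin d) (Fin d × Fin d) ℂ) : Prop :=
  (∀ B : Set G, MeasurableSet B → (M B).PosSemidef) ∧ M ∅ = 0 ∧
    ∀ B : ℕ → Set G, (∀ j, MeasurableSet (B j)) → Pairwise (Function.onFun Disjoint B) →
      M (⋃ j, B j) = ∑' j, M (B j)

/-- Generalized POVM. -/
def IsGPOVM (μ : Measure G) {d : ℕ} (f : G → Matrix (Fin d) (Fin d) ℂ)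
    (M : Set G → Matrix (Fin d × Fin d) (Fin d × Fin d) ℂ) : Prop :=
  IsPreGPOVM M ∧ (M Set.univ * rhoMu μ f).trace = 1

/-- Covariance of a GPOVM. -/
def IsCovariant {d : ℕ} (f : G → Matrix (Fin d) (Fin d) ℂ)
    (M : Set G → Matrix (Fin d × Fin d) (Fin d × Fin d) ℂ) : Prop :=
  ∀ (g : G) (B : Set G), MeasurableSet B →
    M ((g * ·) '' B) = Amat f g * M B * (Amat f g)ᴴ

/-- The covariant GPOVM with seed `T`. -/
def MT (μ : Measure G) {d : ℕ} (f : G → Matrix (Fin d) (Fin d) ℂ)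
    (T : Matrix (Fin d × Fin d) (Fin d × Fin d) ℂ) (B : Set G) :
    Matrix (Fin d × Fin d) (Fin d × Fin d) ℂ :=
  fun p q => ∫ g in B, (Amat f g * T * (Amat f g)ᴴ) p q ∂μ

/-- Pointwise risk. -/
def Dpt {d : ℕ} (w : G → G → ℝ)
    (ν : (Set G → Matrix (Fin d × Fin d) (Fin d × Fin d) ℂ) → G → Measure G)
    (M : Set G → Matrix (Fin d × Fin d) (Fin d × Fin d) ℂ) (g : G) : ℝ :=
  ∫ gh, w g gh ∂(ν M g)

/-- Bayes risk. -/
def Dbayes (μ : Measure G) {d : ℕ} (w : G → G → ℝ)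
    (ν : (Set G → Matrix (Fin d × Fin d) (Fin d × Fin d) ℂ) → G → Measure G)
    (M : Set G → Matrix (Fin d × Fin d) (Fin d × Fin d) ℂ) : ℝ :=
  ∫ g, Dpt w ν M g ∂μ

/-- Minimax risk. -/
def Dmax {d : ℕ} (w : G → G → ℝ)
    (ν : (Set G → Matrix (Fin d × Fin d) (Fin d × Fin d) ℂ) → G → Measure G)
    (M : Set G → Matrix (Fin d × Fin d) (Fin d × Fin d) ℂ) : ℝ :=
  ⨆ g : G, Dpt w ν M g

/-- Twisted GPOVM `M_g`. -/
def twist {d : ℕ} (f : G → Matrix (Fin d) (Fin d) ℂ)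
    (M : Set G → Matrix (Fin d × Fin d) (Fin d × Fin d) ℂ) (g : G) (B : Set G) :
    Matrix (Fin d × Fin d) (Fin d × Fin d) ℂ :=
  (Amat f g)ᴴ * M ((g * ·) '' B) * Amat f g

/-- Matrix of the orthogonal projection onto span {v g}. -/
def P0 {d : ℕ} (f : G → Matrix (Fin d) (Fin d) ℂ) :
    Matrix (Fin d × Fin d) (Fin d × Fin d) ℂ :=
  Matrix.toEuclideanLin.symm
    ((Submodule.span ℂ (Set.range fun g => vec (f g))).subtype ∘ₗ
      (Submodule.orthogonalProjectionOnto (Submodule.span ℂ (Set.range fun g => vec (f g)))).toLinearMap)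


end GroupEstimation

/-!
Write `F_T g = A g * T * (A g)ᴴ`, so that `M_T B` is the entrywise integral of `F_T` over `B`:
positivity and countable additivity are inherited from the integrand. Because the multiplier
`c` is unimodular, `F_T (g * h) = A g * F_T h * (A g)ᴴ`, and left invariance of the Haar measure
turns this into covariance of `M_T`. Since `vec (f g) = A g (vec 1)`, the state `ρ` is itself
`F_T` for the rank-one `T = |vec 1⟩⟨vec 1|`, so `ρμ = M_T G` is fixed by conjugation with the
unitaries `A g`. Hence `Tr (F_T g * ρμ) = Tr (T * ρμ)` for every `g`, and integrating against the
probability measure `μ` gives the trace identity.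
-/

namespace Matrix

section EntrywiseIntegral

variable {Ω : Type*} [MeasurableSpace Ω] {m n 𝕜 : Type*} [RCLike 𝕜] {ν : Measure Ω}

def entrywiseIntegral (ν : Measure Ω) (F : Ω → Matrix m n 𝕜) : Matrix m n 𝕜 :=
  of fun i j => ∫ ω, F ω i j ∂ν

theorem hasSum_entrywiseIntegral_iUnion {F : Ω → Matrix m n 𝕜} {B : ℕ → Set Ω}
    (hB : ∀ k, MeasurableSet (B k)) (hdisj : Pairwise (Function.onFun Disjoint B))
    (hF : ∀ i j, IntegrableOn (fun ω => F ω i j) (⋃ k, B k) ν) :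
    HasSum (fun k => entrywiseIntegral (ν.restrict (B k)) F)
      (entrywiseIntegral (ν.restrict (⋃ k, B k)) F) :=
  Pi.hasSum.mpr fun i => Pi.hasSum.mpr fun j => hasSum_integral_iUnion hB hdisj (hF i j)

variable [Fintype m] [Fintype n]

theorem linearMap_entrywiseIntegral {F : Ω → Matrix m n 𝕜}
    (hF : ∀ i j, Integrable (fun ω => F ω i j) ν) (L : Matrix m n 𝕜 →ₗ[𝕜] 𝕜) :
    L (entrywiseIntegral ν F) = ∫ ω, L (F ω) ∂ν := by
  classical
  have hL (M : Matrix m n 𝕜) : L M = ∑ i, ∑ j, M i j * L (single i j 1) := by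
    conv_lhs => rw [matrix_eq_sum_single M]
    simp only [map_sum]
    congr! with i _ j _
    rw [← smul_eq_mul, ← map_smul, smul_single, smul_eq_mul, mul_one]
  have hint (i : m) (j : n) : Integrable (fun ω => F ω i j * L (single i j 1)) ν :=
    (hF i j).mul_const _
  calc L (entrywiseIntegral ν F) = ∑ i, ∑ j, (∫ ω, F ω i j ∂ν) * L (single i j 1) := hL _
    _ = ∫ ω, ∑ i, ∑ j, F ω i j * L (single i j 1) ∂ν := by
      rw [integral_finsetSum _ fun i _ => integrable_finsetSum _ fun j _ => hint i j]
      simp only [integral_finsetSum _ fun j _ => hint _ j, integral_mul_const]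
    _ = ∫ ω, L (F ω) ∂ν := by simp only [← hL]

theorem mul_entrywiseIntegral_mul {l p : Type*} [Fintype l] {F : Ω → Matrix m n 𝕜}
    (hF : ∀ i j, Integrable (fun ω => F ω i j) ν) (X : Matrix l m 𝕜) (Y : Matrix n p 𝕜) :
    X * entrywiseIntegral ν F * Y = entrywiseIntegral ν fun ω => X * F ω * Y := by
  ext i j
  exact linearMap_entrywiseIntegral hF
    (entryLinearMap 𝕜 𝕜 i j ∘ₗ mulRightLinearMap l 𝕜 Y ∘ₗ mulLeftLinearMap n 𝕜 X)

theorem trace_entrywiseIntegral_mul {F : Ω → Matrix m n 𝕜}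
    (hF : ∀ i j, Integrable (fun ω => F ω i j) ν) (C : Matrix n m 𝕜) :
    (entrywiseIntegral ν F * C).trace = ∫ ω, (F ω * C).trace ∂ν :=
  linearMap_entrywiseIntegral hF (traceLinearMap m 𝕜 𝕜 ∘ₗ mulRightLinearMap m 𝕜 C)

theorem PosSemidef.entrywiseIntegral {F : Ω → Matrix n n 𝕜}
    (hF : ∀ i j, Integrable (fun ω => F ω i j) ν) (hpos : ∀ ω, (F ω).PosSemidef) :
    (entrywiseIntegral ν F).PosSemidef := by
  refine .of_dotProduct_mulVec_nonneg ?_ fun x => ?_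
  · ext i j
    calc star (∫ ω, F ω j i ∂ν) = ∫ ω, star (F ω j i) ∂ν := integral_conj.symm
      _ = ∫ ω, F ω i j ∂ν := by simp only [(hpos _).isHermitian.apply]
  · let L : Matrix n n 𝕜 →ₗ[𝕜] 𝕜 :=
      { toFun := fun M => star x ⬝ᵥ (M *ᵥ x)
        map_add' := fun M N => by simp only [add_mulVec, dotProduct_add]
        map_smul' := fun c M => by simp only [smul_mulVec, dotProduct_smul, RingHom.id_apply] }
    exact (linearMap_entrywiseIntegral hF L).trans_ge
      (integral_nonneg fun ω => (hpos ω).dotProduct_mulVec_nonneg x)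

end EntrywiseIntegral

theorem smul_mul_mul_conjTranspose_smul {m n 𝕜 : Type*} [Fintype n] [RCLike 𝕜] {c : 𝕜}
    (hc : ‖c‖ = 1) (X : Matrix m n 𝕜) (T : Matrix n n 𝕜) :
    (c • X) * T * (c • X)ᴴ = X * T * Xᴴ := by
  have hc' : star c * c = 1 := by
    rw [RCLike.star_def, RCLike.conj_mul, hc, RCLike.ofReal_one, one_pow]
  simp only [conjTranspose_smul, Matrix.smul_mul, Matrix.mul_smul, smul_smul, hc', one_smul]

end Matrix

namespace GroupEstimation

open Matrix

section

variable {G : Type} {d : ℕ} {f : G → Matrix (Fin d) (Fin d) ℂ} {c : G → G → ℂ}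

theorem Amat_mem_unitaryGroup (hf_unitary : ∀ g : G, f g ∈ unitaryGroup (Fin d) ℂ) (g : G) :
    Amat f g ∈ unitaryGroup (Fin d × Fin d) ℂ :=
  kronecker_mem_unitary (hf_unitary g) (one_mem _)

theorem continuous_Amat [TopologicalSpace G] (hf : Continuous f) : Continuous (Amat f) :=
  continuous_matrix fun p q => (hf.matrix_elem p.1 q.1).mul continuous_const

-- Mathlib's `Matrix.vec` stacks columns, so `Matrix.vec Aᵀ` is the vectorization
-- `(k, k') ↦ A k k'` used in `rho`.
theorem rho_eq_Amat_conj (g : G) :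
    rho f g = Amat f g * vecMulVec (Matrix.vec 1) (star (Matrix.vec 1)) * (Amat f g)ᴴ := by
  have hv : Amat f g *ᵥ Matrix.vec 1 = Matrix.vec (f g)ᵀ := by
    rw [Amat, kronecker_mulVec_vec, Matrix.mul_one, Matrix.one_mul]
  rw [mul_vecMulVec, vecMulVec_mul, ← star_mulVec, hv]
  rfl

theorem Amat_mul [Group G] (hc_proj : ∀ g h : G, f (g * h) = c g h • (f g * f h)) (g h : G) :
    Amat f (g * h) = c g h • (Amat f g * Amat f h) := by
  rw [Amat, Amat, Amat, hc_proj, smul_kronecker, ← mul_kronecker_mul, one_mul]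

theorem Amat_conj_mul [Group G] (hc_norm : ∀ g h : G, ‖c g h‖ = 1)
    (hc_proj : ∀ g h : G, f (g * h) = c g h • (f g * f h))
    (T : Matrix (Fin d × Fin d) (Fin d × Fin d) ℂ) (g h : G) :
    Amat f (g * h) * T * (Amat f (g * h))ᴴ =
      Amat f g * (Amat f h * T * (Amat f h)ᴴ) * (Amat f g)ᴴ := by
  rw [Amat_mul hc_proj, smul_mul_mul_conjTranspose_smul (hc_norm g h), conjTranspose_mul]
  simp only [Matrix.mul_assoc]

variable [MeasurableSpace G] {μ : Measure G}

theorem MT_eq_entrywiseIntegral (T : Matrix (Fin d × Fin d) (Fin d × Fin d) ℂ) (B : Set G) :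
    MT μ f T B = entrywiseIntegral (μ.restrict B) fun g => Amat f g * T * (Amat f g)ᴴ :=
  rfl

theorem rhoMu_eq_MT_univ :
    rhoMu μ f = MT μ f (vecMulVec (Matrix.vec 1) (star (Matrix.vec 1))) Set.univ := by
  ext i j
  simp only [rhoMu, MT, Measure.restrict_univ, rho_eq_Amat_conj]

variable [TopologicalSpace G] [CompactSpace G] [OpensMeasurableSpace G] [IsFiniteMeasure μ]

theorem integrable_Amat_conj_apply (hf : Continuous f)
    (T : Matrix (Fin d × Fin d) (Fin d × Fin d) ℂ) (i j : Fin d × Fin d) :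
    Integrable (fun g => (Amat f g * T * (Amat f g)ᴴ) i j) μ :=
  have hA := continuous_Amat hf
  (((hA.matrix_mul continuous_const).matrix_mul hA.matrix_conjTranspose).matrix_elem i j
    ).integrable_of_hasCompactSupport (.of_compactSpace _)

variable [Group G] [MeasurableMul G] [μ.IsMulLeftInvariant]

theorem MT_image_mul_left (hf : Continuous f) (hc_norm : ∀ g h : G, ‖c g h‖ = 1)
    (hc_proj : ∀ g h : G, f (g * h) = c g h • (f g * f h))
    (T : Matrix (Fin d × Fin d) (Fin d × Fin d) ℂ) (g : G) (B : Set G) :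
    MT μ f T ((g * ·) '' B) = Amat f g * MT μ f T B * (Amat f g)ᴴ := by
  rw [MT_eq_entrywiseIntegral, MT_eq_entrywiseIntegral, mul_entrywiseIntegral_mul
    fun i j => (integrable_Amat_conj_apply hf T i j).restrict]
  ext i j
  simp only [entrywiseIntegral, of_apply, ← Amat_conj_mul hc_norm hc_proj]
  exact (measurePreserving_mul_left μ g).setIntegral_image_emb
    (measurableEmbedding_mulLeft g) _ B

theorem Amat_conj_rhoMu (hf : Continuous f) (hc_norm : ∀ g h : G, ‖c g h‖ = 1)
    (hc_proj : ∀ g h : G, f (g * h) = c g h • (f g * f h)) (g : G) :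
    Amat f g * rhoMu μ f * (Amat f g)ᴴ = rhoMu μ f := by
  rw [rhoMu_eq_MT_univ, ← MT_image_mul_left hf hc_norm hc_proj,
    Set.image_univ_of_surjective (mul_left_surjective g)]

theorem Amat_conjTranspose_conj_rhoMu (hf : Continuous f)
    (hf_unitary : ∀ g : G, f g ∈ unitaryGroup (Fin d) ℂ) (hc_norm : ∀ g h : G, ‖c g h‖ = 1)
    (hc_proj : ∀ g h : G, f (g * h) = c g h • (f g * f h)) (g : G) :
    (Amat f g)ᴴ * rhoMu μ f * Amat f g = rhoMu μ f := by
  have hU : (Amat f g)ᴴ * Amat f g = 1 :=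
    mem_unitaryGroup_iff'.mp (Amat_mem_unitaryGroup hf_unitary g)
  calc (Amat f g)ᴴ * rhoMu μ f * Amat f g
      = (Amat f g)ᴴ * (Amat f g * rhoMu μ f * (Amat f g)ᴴ) * Amat f g := by
        rw [Amat_conj_rhoMu hf hc_norm hc_proj]
    _ = ((Amat f g)ᴴ * Amat f g) * rhoMu μ f * ((Amat f g)ᴴ * Amat f g) := by
        simp only [Matrix.mul_assoc]
    _ = rhoMu μ f := by rw [hU, Matrix.one_mul, Matrix.mul_one]

theorem trace_MT_univ_mul_rhoMu [IsProbabilityMeasure μ] (hf : Continuous f)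
    (hf_unitary : ∀ g : G, f g ∈ unitaryGroup (Fin d) ℂ) (hc_norm : ∀ g h : G, ‖c g h‖ = 1)
    (hc_proj : ∀ g h : G, f (g * h) = c g h • (f g * f h))
    (T : Matrix (Fin d × Fin d) (Fin d × Fin d) ℂ) :
    (MT μ f T Set.univ * rhoMu μ f).trace = (T * rhoMu μ f).trace := by
  have htrace (g : G) :
      (Amat f g * T * (Amat f g)ᴴ * rhoMu μ f).trace = (T * rhoMu μ f).trace :=
    calc (Amat f g * T * (Amat f g)ᴴ * rhoMu μ f).trace
        = (Amat f g * (T * ((Amat f g)ᴴ * rhoMu μ f))).trace := by simp only [Matrix.mul_assoc]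
      _ = (T * ((Amat f g)ᴴ * rhoMu μ f) * Amat f g).trace := trace_mul_comm _ _
      _ = (T * ((Amat f g)ᴴ * rhoMu μ f * Amat f g)).trace := by simp only [Matrix.mul_assoc]
      _ = (T * rhoMu μ f).trace := by
        rw [Amat_conjTranspose_conj_rhoMu hf hf_unitary hc_norm hc_proj]
  rw [MT_eq_entrywiseIntegral, Measure.restrict_univ,
    trace_entrywiseIntegral_mul (integrable_Amat_conj_apply hf T)]
  simp only [htrace, integral_const, probReal_univ, one_smul]

end

theorem MT_isCovariantGPOVM_iff_general
    {G : Type} [Group G] [TopologicalSpace G] [IsTopologicalGroup G]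
    [CompactSpace G] [MeasurableSpace G] [BorelSpace G]
    (μ : Measure G) [μ.IsHaarMeasure] [IsProbabilityMeasure μ]
    {d : ℕ} (f : G → Matrix (Fin d) (Fin d) ℂ)
    (hf_cont : Continuous f)
    (hf_unitary : ∀ g : G, f g ∈ Matrix.unitaryGroup (Fin d) ℂ)
    (c : G → G → ℂ) (hc_norm : ∀ g h : G, ‖c g h‖ = 1)
    (hc_proj : ∀ g h : G, f (g * h) = c g h • (f g * f h))
    (T : Matrix (Fin d × Fin d) (Fin d × Fin d) ℂ) (hT : T.PosSemidef) :
    MT μ f T ∅ = 0 ∧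
    (∀ B : Set G, MeasurableSet B → (MT μ f T B).PosSemidef) ∧
    (∀ B : ℕ → Set G, (∀ j, MeasurableSet (B j)) → Pairwise (Function.onFun Disjoint B) →
      MT μ f T (⋃ j, B j) = ∑' j, MT μ f T (B j)) ∧
    (∀ (g : G) (B : Set G), MeasurableSet B →
      MT μ f T ((g * ·) '' B) = Amat f g * MT μ f T B * (Amat f g)ᴴ) ∧
    (MT μ f T Set.univ * rhoMu μ f).trace = (T * rhoMu μ f).trace ∧
    ((IsGPOVM μ f (MT μ f T) ∧ IsCovariant f (MT μ f T)) ↔ (T * rhoMu μ f).trace = 1) := by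
  have hint := integrable_Amat_conj_apply (μ := μ) hf_cont T
  have hempty : MT μ f T ∅ = 0 := by
    ext
    simp [MT]
  have hpsd (B : Set G) (_ : MeasurableSet B) : (MT μ f T B).PosSemidef :=
    .entrywiseIntegral (fun i j => (hint i j).restrict) fun _ => hT.mul_mul_conjTranspose_same _
  have hadd (B : ℕ → Set G) (hB : ∀ j, MeasurableSet (B j))
      (hdisj : Pairwise (Function.onFun Disjoint B)) :
      MT μ f T (⋃ j, B j) = ∑' j, MT μ f T (B j) :=
    (hasSum_entrywiseIntegral_iUnion hB hdisj fun i j => (hint i j).integrableOn).tsum_eq.symm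
  have hcov : IsCovariant f (MT μ f T) := fun g B _ =>
    MT_image_mul_left hf_cont hc_norm hc_proj T g B
  have htrace := trace_MT_univ_mul_rhoMu hf_cont hf_unitary hc_norm hc_proj T (μ := μ)
  refine ⟨hempty, hpsd, hadd, hcov, htrace, ?_⟩
  rw [IsGPOVM, IsPreGPOVM, htrace]
  exact ⟨fun h => h.1.2, fun h => ⟨⟨⟨hpsd, hempty, hadd⟩, h⟩, hcov⟩⟩

/-- `M_T` is a covariant GPOVM exactly when `Tr (T ρμ) = 1`. -/
theorem MT_isCovariantGPOVM_iff
    {G : Type} [Group G] [TopologicalSpace G] [IsTopologicalGroup G]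
    [CompactSpace G] [T2Space G] [MeasurableSpace G] [BorelSpace G]
    (μ : Measure G) [μ.IsHaarMeasure] [IsProbabilityMeasure μ]
    {d : ℕ} (hd : 0 < d) (f : G → Matrix (Fin d) (Fin d) ℂ)
    (hf_cont : Continuous f) (hf_one : f 1 = 1)
    (hf_unitary : ∀ g : G, f g ∈ Matrix.unitaryGroup (Fin d) ℂ)
    (c : G → G → ℂ) (hc_norm : ∀ g h : G, ‖c g h‖ = 1)
    (hc_proj : ∀ g h : G, f (g * h) = c g h • (f g * f h))
    (T : Matrix (Fin d × Fin d) (Fin d × Fin d) ℂ) (hT : T.PosSemidef) :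
    MT μ f T ∅ = 0 ∧
    (∀ B : Set G, MeasurableSet B → (MT μ f T B).PosSemidef) ∧
    (∀ B : ℕ → Set G, (∀ j, MeasurableSet (B j)) → Pairwise (Function.onFun Disjoint B) →
      MT μ f T (⋃ j, B j) = ∑' j, MT μ f T (B j)) ∧
    (∀ (g : G) (B : Set G), MeasurableSet B →
      MT μ f T ((g * ·) '' B) = Amat f g * MT μ f T B * (Amat f g)ᴴ) ∧
    (MT μ f T Set.univ * rhoMu μ f).trace = (T * rhoMu μ f).trace ∧
    ((IsGPOVM μ f (MT μ f T) ∧ IsCovariant f (MT μ f T)) ↔ (T * rhoMu μ f).trace = 1) :=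
  MT_isCovariantGPOVM_iff_general μ f hf_cont hf_unitary c hc_norm hc_proj T hT

end GroupEstimation
end
end

section
/- If M is a covariant GPOVM then the pointwise risk is constant: D_pt M g = D_pt M 1 for every g : G; consequently D_max M = D_bayes M. -/
open MeasureTheory
open scoped Kronecker Matrix ComplexOrder

noncomputable section

/-!
Since `ρ g = A g ρ(1) (A g)ᴴ` with `A g` unitary, covariance of `M` gives
`tr (M (g • B) ρ g) = tr (M B ρ 1)`: the outcome distribution at `g` is the left translate by `g`
of the outcome distribution at `1`. Left invariance of `w` then makes the pointwise risk
independent of `g`, and a constant function has its supremum equal to its mean.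
-/

namespace GroupEstimation

theorem trace_unitary_conj_mul_unitary_conj {n R : Type*} [Fintype n] [DecidableEq n]
    [CommRing R] [StarRing R] {U : Matrix n n R} (hU : U ∈ unitary (Matrix n n R))
    (X Y : Matrix n n R) : (U * X * Uᴴ * (U * Y * Uᴴ)).trace = (X * Y).trace := by
  have hUU : Uᴴ * U = 1 := Unitary.star_mul_self_of_mem hU
  calc (U * X * Uᴴ * (U * Y * Uᴴ)).trace = (U * (X * Y) * Uᴴ).trace := by
        simp only [Matrix.mul_assoc, ← Matrix.mul_assoc Uᴴ U, hUU, Matrix.one_mul]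
    _ = (X * Y).trace := by
        rw [Matrix.trace_mul_comm, ← Matrix.mul_assoc, hUU, Matrix.one_mul]

section TranslationEquivariant

variable {G : Type*} [Group G] [MeasurableSpace G] [MeasurableMul G]

theorem eq_map_mul_left_of_apply_image_mul_left {κ : G → Measure G}
    (hκ : ∀ (g : G) (B : Set G), MeasurableSet B → κ g ((g * ·) '' B) = κ 1 B) (g : G) :
    κ g = (κ 1).map (g * ·) := by
  refine Measure.ext fun B hB => ?_
  have hB' : MeasurableSet ((g * ·) ⁻¹' B) := measurable_const_mul g hB
  rw [Measure.map_apply (measurable_const_mul g) hB, ← hκ g _ hB',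
    Set.image_preimage_eq B (mul_left_surjective g)]

theorem integral_eq_integral_one_of_eq_map_mul_left {E : Type*} [NormedAddCommGroup E]
    [NormedSpace ℝ E] {κ : G → Measure G} (hκ : ∀ g, κ g = (κ 1).map (g * ·))
    {w : G → G → E} (hw : ∀ g ĝ g' : G, w (g' * g) (g' * ĝ) = w g ĝ) (g : G) :
    ∫ ĝ, w g ĝ ∂κ g = ∫ ĝ, w 1 ĝ ∂κ 1 := by
  rw [hκ g, ← MeasurableEquiv.coe_mulLeft, integral_map_equiv]
  congr 1 with ĝ
  simpa using hw 1 ĝ g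

end TranslationEquivariant

section Covariance

variable {G : Type} {d : ℕ} {f : G → Matrix (Fin d) (Fin d) ℂ}

theorem Amat_mem_unitary {g : G} (hg : f g ∈ Matrix.unitaryGroup (Fin d) ℂ) :
    Amat f g ∈ unitary (Matrix (Fin d × Fin d) (Fin d × Fin d) ℂ) :=
  Matrix.kronecker_mem_unitary hg (one_mem _)

theorem rho_eq_Amat_mul_rho_one_mul [Group G] (hf_one : f 1 = 1) (g : G) :
    rho f g = Amat f g * rho f 1 * (Amat f g)ᴴ := by
  ext p q
  simp [rho, Amat, Matrix.mul_apply, Matrix.kroneckerMap_apply, hf_one,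
    Matrix.one_apply, Fintype.sum_prod_type, Matrix.conjTranspose_apply, apply_ite,
    Finset.sum_ite_eq, Finset.sum_ite_eq']

theorem trace_image_mul_left_mul_rho [Group G] [MeasurableSpace G] (hf_one : f 1 = 1)
    (hf_unitary : ∀ g : G, f g ∈ Matrix.unitaryGroup (Fin d) ℂ)
    {M : Set G → Matrix (Fin d × Fin d) (Fin d × Fin d) ℂ} (hMcov : IsCovariant f M)
    (g : G) {B : Set G} (hB : MeasurableSet B) :
    (M ((g * ·) '' B) * rho f g).trace = (M B * rho f 1).trace := by
  rw [hMcov g B hB, rho_eq_Amat_mul_rho_one_mul hf_one g,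
    trace_unitary_conj_mul_unitary_conj (Amat_mem_unitary (hf_unitary g))]

end Covariance

theorem Dpt_const_of_covariant_general
    {G : Type} [Group G] [TopologicalSpace G] [IsTopologicalGroup G]
    [MeasurableSpace G] [BorelSpace G]
    (μ : Measure G) [IsProbabilityMeasure μ]
    {d : ℕ} (f : G → Matrix (Fin d) (Fin d) ℂ)
    (hf_one : f 1 = 1)
    (hf_unitary : ∀ g : G, f g ∈ Matrix.unitaryGroup (Fin d) ℂ)
    (w : G → G → ℝ)
    (hw_cov : ∀ g gh g' : G, w (g' * g) (g' * gh) = w g gh)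
    (ν : (Set G → Matrix (Fin d × Fin d) (Fin d × Fin d) ℂ) → G → Measure G)
    (hν : ∀ M : Set G → Matrix (Fin d × Fin d) (Fin d × Fin d) ℂ, IsPreGPOVM M →
      ∀ (g : G) (B : Set G), MeasurableSet B →
        ν M g B = ENNReal.ofReal ((M B * rho f g).trace).re)
    (M : Set G → Matrix (Fin d × Fin d) (Fin d × Fin d) ℂ)
    (hM : IsGPOVM μ f M) (hMcov : IsCovariant f M) :
    (∀ g : G, Dpt w ν M g = Dpt w ν M 1) ∧ Dmax w ν M = Dbayes μ w ν M := by
  have hν_map : ∀ g, ν M g = (ν M 1).map (g * ·) :=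
    eq_map_mul_left_of_apply_image_mul_left fun g B hB => by
      have hgB : MeasurableSet ((g * ·) '' B) := by
        rw [Set.image_mul_left]
        exact measurable_const_mul _ hB
      rw [hν M hM.1 g _ hgB, hν M hM.1 1 B hB,
        trace_image_mul_left_mul_rho hf_one hf_unitary hMcov g hB]
  have hDpt : ∀ g, Dpt w ν M g = Dpt w ν M 1 :=
    integral_eq_integral_one_of_eq_map_mul_left hν_map hw_cov
  refine ⟨hDpt, ?_⟩
  simp only [Dmax, Dbayes, hDpt, ciSup_const, integral_const, probReal_univ, one_smul]

/-- For a covariant GPOVM the pointwise risk is constant, hence minimax = Bayes. -/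
theorem Dpt_const_of_covariant
    {G : Type} [Group G] [TopologicalSpace G] [IsTopologicalGroup G]
    [CompactSpace G] [T2Space G] [MeasurableSpace G] [BorelSpace G]
    (μ : Measure G) [μ.IsHaarMeasure] [IsProbabilityMeasure μ]
    {d : ℕ} (hd : 0 < d) (f : G → Matrix (Fin d) (Fin d) ℂ)
    (hf_cont : Continuous f) (hf_one : f 1 = 1)
    (hf_unitary : ∀ g : G, f g ∈ Matrix.unitaryGroup (Fin d) ℂ)
    (c : G → G → ℂ) (hc_norm : ∀ g h : G, ‖c g h‖ = 1)
    (hc_proj : ∀ g h : G, f (g * h) = c g h • (f g * f h))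
    (w : G → G → ℝ) (hw_cont : Continuous fun p : G × G => w p.1 p.2)
    (hw_bdd : ∃ C : ℝ, ∀ g gh : G, |w g gh| ≤ C)
    (hw_cov : ∀ g gh g' : G, w (g' * g) (g' * gh) = w g gh)
    (ν : (Set G → Matrix (Fin d × Fin d) (Fin d × Fin d) ℂ) → G → Measure G)
    (hν : ∀ M : Set G → Matrix (Fin d × Fin d) (Fin d × Fin d) ℂ, IsPreGPOVM M →
      ∀ (g : G) (B : Set G), MeasurableSet B →
        ν M g B = ENNReal.ofReal ((M B * rho f g).trace).re)
    (M : Set G → Matrix (Fin d × Fin d) (Fin d × Fin d) ℂ)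
    (hM : IsGPOVM μ f M) (hMcov : IsCovariant f M) :
    (∀ g : G, Dpt w ν M g = Dpt w ν M 1) ∧ Dmax w ν M = Dbayes μ w ν M :=
  Dpt_const_of_covariant_general μ f hf_one hf_unitary w hw_cov ν hν M hM hMcov

end GroupEstimation
end
end
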